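/- arXiv:2411.05334 — 2 statements merged into one kernel-verified Lean document; each statement's English description precedes it below -/
import Mathlib

section
/- First fundamental theorem of double almost-Riordan arrays, odd case: Let u = Σ_{k≥0} u_{2k+1}t^{2k+1} be an odd formal power series in K[[t]] and set V := Σ_{k≥0} u_{2k+1}t^{k}. Then for every n ≥ 0, Σ_{k=0}^{n} d_{n,k}·([t^k]u) = [t^n]( t·g·(V∘(f₁f₂)) ); i.e., applying (b|g;f₁,f₂) to the coefficient vector of an odd series u produces the coefficient vector of (t g/√(f₁f₂))·u(√(f₁f₂)). -/
open PowerSeries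

variable {K : Type*} [Field K]

/-- Formal substitution `U ∘ h` of a power series `h` (intended with `h(0) = 0`)
into a power series `U`:  `[tⁿ](U∘h) = Σ_{j≤n} ([tʲ]U)·[tⁿ](hʲ)`. -/
noncomputable def psComp (U h : PowerSeries K) : PowerSeries K :=
  PowerSeries.mk fun n => ∑ j ∈ Finset.range (n + 1), coeff j U * coeff n (h ^ j)

/-- The `(n,k)` entry of the double almost-Riordan array `(b | g ; f₁, f₂)`:
column 0 is `b`, column `2ℓ+1` is `t·g·(f₁f₂)^ℓ`, column `2ℓ+2` is `t·g·f₁·(f₁f₂)^ℓ`. -/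
noncomputable def dar (b g f₁ f₂ : PowerSeries K) (n k : ℕ) : K :=
  if k = 0 then coeff n b
  else if k % 2 = 1 then coeff n (X * g * (f₁ * f₂) ^ ((k - 1) / 2))
  else coeff n (X * g * f₁ * (f₁ * f₂) ^ ((k - 2) / 2))

/-! Only the odd columns `t·g·(f₁f₂)^ℓ` of the array meet the nonzero coefficients of `u`, so the
sum collapses to `Σ_ℓ [t^ℓ]V · [tⁿ](t·g·(f₁f₂)^ℓ)`, which is the `n`-th coefficient of
`t·g·(V∘(f₁f₂))` because `f₁f₂` has no constant term. -/

theorem Finset.sum_range_two_mul {M : Type*} [AddCommMonoid M] (F : ℕ → M) (m : ℕ) :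
    ∑ k ∈ Finset.range (2 * m), F k = ∑ ℓ ∈ Finset.range m, (F (2 * ℓ) + F (2 * ℓ + 1)) := by
  induction m with
  | zero => simp
  | succ m ih =>
    rw [show 2 * (m + 1) = 2 * m + 1 + 1 by ring, Finset.sum_range_succ, Finset.sum_range_succ,
      ih, Finset.sum_range_succ, add_assoc]

section CommSemiring

variable {R : Type*} [CommSemiring R]

theorem sum_range_mul_coeff_of_odd (a : ℕ → R) (u : PowerSeries R) (n : ℕ)
    (ha : ∀ k, n < k → a k = 0) (hu : ∀ k, coeff (2 * k) u = 0) :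
    ∑ k ∈ Finset.range (n + 1), a k * coeff k u =
      ∑ ℓ ∈ Finset.range (n + 1), a (2 * ℓ + 1) * coeff (2 * ℓ + 1) u := by
  calc ∑ k ∈ Finset.range (n + 1), a k * coeff k u
      = ∑ k ∈ Finset.range (2 * (n + 1)), a k * coeff k u := by
        refine Finset.sum_subset (Finset.range_subset_range.mpr (by omega)) fun k _ hk => ?_
        rw [ha k (by simpa using hk), zero_mul]
    _ = _ := by simp only [Finset.sum_range_two_mul, hu, mul_zero, zero_add]

theorem coeff_pow_eq_zero_of_lt {h : PowerSeries R} (hh : constantCoeff h = 0) {m j : ℕ}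
    (hmj : m < j) : coeff m (h ^ j) = 0 :=
  coeff_of_lt_order m <| (Nat.cast_lt.mpr hmj).trans_le (le_order_pow_of_constantCoeff_eq_zero j hh)

theorem X_pow_two_mul_dvd_mul_pow {f₁ f₂ : PowerSeries R} (h₁ : constantCoeff f₁ = 0)
    (h₂ : constantCoeff f₂ = 0) (ℓ : ℕ) : (X : PowerSeries R) ^ (2 * ℓ) ∣ (f₁ * f₂) ^ ℓ := by
  rw [pow_mul, sq]
  exact pow_dvd_pow_of_dvd (mul_dvd_mul (X_dvd_iff.mpr h₁) (X_dvd_iff.mpr h₂)) ℓ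

end CommSemiring

theorem coeff_psComp_eq_sum_range (U : PowerSeries K) {h : PowerSeries K}
    (hh : constantCoeff h = 0) {m N : ℕ} (hmN : m ≤ N) :
    coeff m (psComp U h) = ∑ j ∈ Finset.range (N + 1), coeff j U * coeff m (h ^ j) := by
  rw [psComp, coeff_mk]
  refine Finset.sum_subset (Finset.range_subset_range.mpr (by omega)) fun j _ hj => ?_
  rw [coeff_pow_eq_zero_of_lt hh (by simpa using hj), mul_zero]

theorem coeff_mul_psComp (A U : PowerSeries K) {h : PowerSeries K} (hh : constantCoeff h = 0)
    (n : ℕ) :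
    coeff n (A * psComp U h) = ∑ j ∈ Finset.range (n + 1), coeff j U * coeff n (A * h ^ j) := by
  have hcoeff : ∀ p ∈ Finset.HasAntidiagonal.antidiagonal n,
      coeff p.1 A * coeff p.2 (psComp U h) =
        ∑ j ∈ Finset.range (n + 1), coeff j U * (coeff p.1 A * coeff p.2 (h ^ j)) := by
    intro p hp
    rw [coeff_psComp_eq_sum_range U hh (Finset.HasAntidiagonal.antidiagonal.snd_le hp),
      Finset.mul_sum]
    exact Finset.sum_congr rfl fun j _ => mul_left_comm _ _ _
  simp only [coeff_mul, Finset.sum_congr rfl hcoeff, Finset.mul_sum]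
  exact Finset.sum_comm

theorem dar_odd (b g f₁ f₂ : PowerSeries K) (n ℓ : ℕ) :
    dar b g f₁ f₂ n (2 * ℓ + 1) = coeff n (X * g * (f₁ * f₂) ^ ℓ) := by
  rw [dar, if_neg (by omega), if_pos (by omega), show (2 * ℓ + 1 - 1) / 2 = ℓ by omega]

theorem dar_even_succ (b g f₁ f₂ : PowerSeries K) (n ℓ : ℕ) :
    dar b g f₁ f₂ n (2 * ℓ + 2) = coeff n (X * g * f₁ * (f₁ * f₂) ^ ℓ) := by
  rw [dar, if_neg (by omega), if_neg (by omega), show (2 * ℓ + 2 - 2) / 2 = ℓ by omega]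

/-- Column `k ≥ 1` is divisible by `X ^ k`. -/
theorem dar_eq_zero_of_lt (b g : PowerSeries K) {f₁ f₂ : PowerSeries K}
    (h₁ : constantCoeff f₁ = 0) (h₂ : constantCoeff f₂ = 0) {n k : ℕ} (hnk : n < k) :
    dar b g f₁ f₂ n k = 0 := by
  obtain ⟨ℓ, rfl | rfl⟩ : ∃ ℓ, k = 2 * ℓ + 1 ∨ k = 2 * ℓ + 2 := ⟨(k - 1) / 2, by omega⟩
  all_goals obtain ⟨d, hd⟩ := X_pow_two_mul_dvd_mul_pow h₁ h₂ ℓ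
  · rw [dar_odd]
    refine X_pow_dvd_iff.mp ⟨g * d, ?_⟩ n hnk
    rw [hd]; ring
  · obtain ⟨e, he⟩ := X_dvd_iff.mpr h₁
    rw [dar_even_succ]
    refine X_pow_dvd_iff.mp ⟨g * e * d, ?_⟩ n hnk
    rw [hd, he]; ring

theorem fft_odd_general
    (b g f₁ f₂ : PowerSeries K)
    (hf₁o : ∀ k, coeff (2 * k) f₁ = 0)
    (hf₂o : ∀ k, coeff (2 * k) f₂ = 0)
    (u V : PowerSeries K)
    (huo : ∀ k, coeff (2 * k) u = 0)
    (hV : ∀ k, coeff k V = coeff (2 * k + 1) u) :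
    ∀ n : ℕ,
      ∑ k ∈ Finset.range (n + 1), dar b g f₁ f₂ n k * coeff k u =
        coeff n (X * g * psComp V (f₁ * f₂)) := by
  intro n
  have h₁ : constantCoeff f₁ = 0 := by simpa using hf₁o 0
  have h₂ : constantCoeff f₂ = 0 := by simpa using hf₂o 0
  rw [sum_range_mul_coeff_of_odd _ u n (fun k => dar_eq_zero_of_lt b g h₁ h₂) huo,
    coeff_mul_psComp _ _ (by simp [h₁]) n]
  refine Finset.sum_congr rfl fun ℓ _ => ?_
  rw [dar_odd, hV, mul_comm]

/-- First fundamental theorem of double almost-Riordan arrays, odd case. -/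
theorem fft_odd
    (b g f₁ f₂ : PowerSeries K)
    (hbe : ∀ k, coeff (2 * k + 1) b = 0)
    (hge : ∀ k, coeff (2 * k + 1) g = 0)
    (hb0 : constantCoeff b ≠ 0)
    (hg0 : constantCoeff g ≠ 0)
    (hf₁o : ∀ k, coeff (2 * k) f₁ = 0)
    (hf₂o : ∀ k, coeff (2 * k) f₂ = 0)
    (hf₁1 : coeff 1 f₁ ≠ 0)
    (hf₂1 : coeff 1 f₂ ≠ 0)
    (u V : PowerSeries K)
    (huo : ∀ k, coeff (2 * k) u = 0)
    (hV : ∀ k, coeff k V = coeff (2 * k + 1) u) :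
    ∀ n : ℕ,
      ∑ k ∈ Finset.range (n + 1), dar b g f₁ f₂ n k * coeff k u =
        coeff n (X * g * psComp V (f₁ * f₂)) :=
  fft_odd_general b g f₁ f₂ hf₁o hf₂o u V huo hV
end

section
/- Column generating functions of the compression of a double almost-Riordan array: Define the compression of D = (b|g;f₁,f₂) by d̂_{n,k} := d_{2n−k,k} for 0 ≤ k ≤ n, and define b̂, ĝ, f̂₁, f̂₂ ∈ K[[t]] by [t^k]b̂ = b_{2k}, [t^k]ĝ = g_{2k}, [t^{k+1}]f̂ᵢ = f_{i,2k+1} for k ≥ 0 and [t⁰]f̂ᵢ = 0 (i = 1,2). Then for all 0 ≤ k ≤ n: d̂_{n,0} = [t^n]b̂; for odd k = 2ℓ+1, d̂_{n,k} = [t^n]( t·ĝ·(f̂₁f̂₂)^ℓ ); and for even k = 2ℓ+2 ≥ 2, d̂_{n,k} = [t^n]( t·ĝ·f̂₁·(f̂₁f̂₂)^ℓ ). -/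
open PowerSeries

variable {K : Type*} [Field K]

/-!
An even series `A` is `Â(t²)`, and an odd series `f` with `f̂ = t·u` is `t·u(t²)`. Hence column `k`
of `(b | g ; f₁, f₂)` is `t^k·H(t²)` where `t^k·H(t)` is column `k` of `(b̂ | ĝ ; f̂₁, f̂₂)`, and
`[t^(2n-k)] t^k·H(t²) = [t^n] t^k·H(t)`.
-/

section Expand

variable {R : Type*} [CommRing R]

theorem eq_expand_two_of_coeff_odd_eq_zero {A Ah : R⟦X⟧} (hodd : ∀ k, coeff (2 * k + 1) A = 0)
    (hAh : ∀ k, coeff k Ah = coeff (2 * k) A) : A = expand 2 two_ne_zero Ah := by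
  ext n
  obtain ⟨k, rfl | rfl⟩ := Nat.even_or_odd' n
  · rw [coeff_expand_mul, hAh]
  · rw [hodd, coeff_expand_of_not_dvd _ _ _ (by omega)]

theorem eq_X_mul_expand_two_of_coeff_even_eq_zero {A u : R⟦X⟧}
    (heven : ∀ k, coeff (2 * k) A = 0) (hu : ∀ k, coeff k u = coeff (2 * k + 1) A) :
    A = X * expand 2 two_ne_zero u := by
  ext n
  rcases n with _ | n
  · simpa using heven 0
  · rw [coeff_succ_X_mul]
    obtain ⟨k, rfl | rfl⟩ := Nat.even_or_odd' n
    · rw [coeff_expand_mul, hu]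
    · rw [coeff_expand_of_not_dvd _ _ _ (by omega), show 2 * k + 1 + 1 = 2 * (k + 1) by ring,
        heven]

theorem coeff_two_mul_sub_X_pow_mul_expand_two (H : R⟦X⟧) {k n : ℕ} (hk : k ≤ n) :
    coeff (2 * n - k) (X ^ k * expand 2 two_ne_zero H) = coeff n (X ^ k * H) := by
  obtain ⟨m, rfl⟩ := Nat.exists_eq_add_of_le' hk
  rw [show 2 * (m + k) - k = 2 * m + k by omega, coeff_X_pow_mul, coeff_X_pow_mul,
    coeff_expand_mul]

end Expand

section Dar

variable (b g f₁ f₂ : K⟦X⟧) (n l : ℕ)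

theorem dar_zero : dar b g f₁ f₂ n 0 = coeff n b := by
  simp [dar]

theorem dar_two_mul_add_one :
    dar b g f₁ f₂ n (2 * l + 1) = coeff n (X * g * (f₁ * f₂) ^ l) := by
  simp [dar, Nat.add_mod]

theorem dar_two_mul_add_two :
    dar b g f₁ f₂ n (2 * l + 2) = coeff n (X * g * f₁ * (f₁ * f₂) ^ l) := by
  simp [dar, show (2 * l + 2) % 2 = 0 by omega]

end Dar

theorem dar_compression_columns_general
    (b g f₁ f₂ : PowerSeries K)
    (hge : ∀ k, coeff (2 * k + 1) g = 0)
    (hf₁o : ∀ k, coeff (2 * k) f₁ = 0)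
    (hf₂o : ∀ k, coeff (2 * k) f₂ = 0)
    (bh gh f₁h f₂h : PowerSeries K)
    (hbh : ∀ k, coeff k bh = coeff (2 * k) b)
    (hgh : ∀ k, coeff k gh = coeff (2 * k) g)
    (hf₁h0 : constantCoeff f₁h = 0)
    (hf₁h : ∀ k, coeff (k + 1) f₁h = coeff (2 * k + 1) f₁)
    (hf₂h0 : constantCoeff f₂h = 0)
    (hf₂h : ∀ k, coeff (k + 1) f₂h = coeff (2 * k + 1) f₂) :
    ∀ n : ℕ,
      dar b g f₁ f₂ (2 * n) 0 = coeff n bh ∧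
      (∀ l : ℕ, 2 * l + 1 ≤ n →
        dar b g f₁ f₂ (2 * n - (2 * l + 1)) (2 * l + 1) =
          coeff n (X * gh * (f₁h * f₂h) ^ l)) ∧
      (∀ l : ℕ, 2 * l + 2 ≤ n →
        dar b g f₁ f₂ (2 * n - (2 * l + 2)) (2 * l + 2) =
          coeff n (X * gh * f₁h * (f₁h * f₂h) ^ l)) := by
  intro n
  obtain ⟨u₁, rfl⟩ := X_dvd_iff.mpr hf₁h0
  obtain ⟨u₂, rfl⟩ := X_dvd_iff.mpr hf₂h0
  set E : K⟦X⟧ →ₐ[K] K⟦X⟧ := expand 2 two_ne_zero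
  have hg : g = E gh := eq_expand_two_of_coeff_odd_eq_zero hge hgh
  have hf₁ : f₁ = X * E u₁ :=
    eq_X_mul_expand_two_of_coeff_even_eq_zero hf₁o fun k => by rw [← hf₁h, coeff_succ_X_mul]
  have hf₂ : f₂ = X * E u₂ :=
    eq_X_mul_expand_two_of_coeff_even_eq_zero hf₂o fun k => by rw [← hf₂h, coeff_succ_X_mul]
  refine ⟨by rw [dar_zero, hbh], fun l hl => ?_, fun l hl => ?_⟩
  · have hcol : X * g * (f₁ * f₂) ^ l = X ^ (2 * l + 1) * E (gh * (u₁ * u₂) ^ l) := by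
      rw [hg, hf₁, hf₂, map_mul, map_pow, map_mul]; ring
    rw [dar_two_mul_add_one, hcol, coeff_two_mul_sub_X_pow_mul_expand_two _ hl]
    ring_nf
  · have hcol : X * g * f₁ * (f₁ * f₂) ^ l = X ^ (2 * l + 2) * E (gh * u₁ * (u₁ * u₂) ^ l) := by
      rw [hg, hf₁, hf₂, map_mul, map_pow, map_mul, map_mul]; ring
    rw [dar_two_mul_add_two, hcol, coeff_two_mul_sub_X_pow_mul_expand_two _ hl]
    ring_nf

/-- Column generating functions of the compression of a double almost-Riordan array. -/
theorem dar_compression_columns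
    (b g f₁ f₂ : PowerSeries K)
    (hbe : ∀ k, coeff (2 * k + 1) b = 0)
    (hge : ∀ k, coeff (2 * k + 1) g = 0)
    (hb0 : constantCoeff b ≠ 0)
    (hg0 : constantCoeff g ≠ 0)
    (hf₁o : ∀ k, coeff (2 * k) f₁ = 0)
    (hf₂o : ∀ k, coeff (2 * k) f₂ = 0)
    (hf₁1 : coeff 1 f₁ ≠ 0)
    (hf₂1 : coeff 1 f₂ ≠ 0)
    (bh gh f₁h f₂h : PowerSeries K)
    (hbh : ∀ k, coeff k bh = coeff (2 * k) b)
    (hgh : ∀ k, coeff k gh = coeff (2 * k) g)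
    (hf₁h0 : constantCoeff f₁h = 0)
    (hf₁h : ∀ k, coeff (k + 1) f₁h = coeff (2 * k + 1) f₁)
    (hf₂h0 : constantCoeff f₂h = 0)
    (hf₂h : ∀ k, coeff (k + 1) f₂h = coeff (2 * k + 1) f₂) :
    ∀ n : ℕ,
      dar b g f₁ f₂ (2 * n) 0 = coeff n bh ∧
      (∀ l : ℕ, 2 * l + 1 ≤ n →
        dar b g f₁ f₂ (2 * n - (2 * l + 1)) (2 * l + 1) =
          coeff n (X * gh * (f₁h * f₂h) ^ l)) ∧
      (∀ l : ℕ, 2 * l + 2 ≤ n →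
        dar b g f₁ f₂ (2 * n - (2 * l + 2)) (2 * l + 2) =
          coeff n (X * gh * f₁h * (f₁h * f₂h) ^ l)) :=
  dar_compression_columns_general b g f₁ f₂ hge hf₁o hf₂o bh gh f₁h f₂h hbh hgh hf₁h0 hf₁h hf₂h0
    hf₂h
end
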